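/- Let π be a permutation of {1,…,n} and let a < b. The pair (b,a) is an inversion in T(π) (i.e. b precedes a in T(π)) if and only if there exists a value c > b such that the values a, c, b occur in this order in π (i.e. (a,c,b) is an occurrence of the pattern 132 in π). -/

import Mathlib

private theorem length_takeWhile_ne_lt {w : List ℕ} {m : ℕ} (hm : m ∈ w) :
    (w.takeWhile (· ≠ m)).length < w.length := by
  induction w with
  | nil => cases hm
  | cons a as ih =>
    by_cases ha : a = m
    · subst ha
      simp [List.takeWhile_cons]
    · rw [List.takeWhile_cons_of_pos (by simpa using ha)]
      have hm' : m ∈ as := by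
        rcases List.mem_cons.mp hm with h | h
        · exact absurd h.symm ha
        · exact h
      simpa using Nat.succ_lt_succ (ih hm')

private theorem length_tail_dropWhile_lt {w : List ℕ} (hw : w ≠ []) (p : ℕ → Bool) :
    ((w.dropWhile p).tail).length < w.length := by
  cases hd : w.dropWhile p with
  | nil => simpa using List.length_pos_iff.mpr hw
  | cons x xs =>
    have h1 : (x :: xs).length ≤ w.length := by
      rw [← hd]; exact (List.dropWhile_sublist p).length_le
    simp only [List.tail_cons]
    exact lt_of_lt_of_le (by simp) h1

/-- The classical stack sort operator on words: `S(ε) = ε` and `S(L m R) = S(L) S(R) m`,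
where `m` is the largest entry of the word `L m R`. -/
def stackSort : List ℕ → List ℕ
  | [] => []
  | a :: as =>
    let m := ((a :: as).max?).getD 0
    stackSort ((a :: as).takeWhile (· ≠ m)) ++
      stackSort (((a :: as).dropWhile (· ≠ m)).tail) ++ [m]
termination_by w => w.length
decreasing_by
  · refine length_takeWhile_ne_lt ?_
    have : (a :: as).max? = some (((a :: as).max?).getD 0) := by
      cases h : (a :: as).max? with
      | none => simp [List.max?_eq_none_iff] at h
      | some b => simp
    exact List.max?_mem this
  · exact length_tail_dropWhile_lt (by simp) _

/-- The revstack sort operator `T = S ∘ rev`. -/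
def revstackSort (w : List ℕ) : List ℕ := stackSort w.reverse

/-- The word of the identity permutation of `{1,…,n}`, namely `1 2 ⋯ n`. -/
def idPerm (n : ℕ) : List ℕ := List.range' 1 n

/-- `w` is (the word of) a permutation of `{1,…,n}`. -/
def IsPermWord (n : ℕ) (w : List ℕ) : Prop := w.Perm (idPerm n)

/-- `x` precedes `y` in the word `w`, i.e. the position of `x` is smaller than that of `y`. -/
def Precedes (w : List ℕ) (x y : ℕ) : Prop := w.idxOf x < w.idxOf y

/-- `w` contains an occurrence of the pattern `132`: values `a < b < c` occurring in
the order `a, c, b`. -/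
def Contains132 (w : List ℕ) : Prop :=
  ∃ a b c, a ∈ w ∧ b ∈ w ∧ c ∈ w ∧ a < b ∧ b < c ∧ Precedes w a c ∧ Precedes w c b

/-- `w` contains an occurrence of the pattern `2431`: values `a < b < c < d` occurring in
the order `b, d, c, a`. -/
def Contains2431 (w : List ℕ) : Prop :=
  ∃ a b c d, a ∈ w ∧ b ∈ w ∧ c ∈ w ∧ d ∈ w ∧ a < b ∧ b < c ∧ c < d ∧
    Precedes w b d ∧ Precedes w d c ∧ Precedes w c a

/-- `w` contains an occurrence of the barred pattern `241 5̄ 3`: values `a < b < c < d`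
occurring in the order `b, d, a, c` with no value `e > d` lying between `a` and `c` in `w`. -/
def ContainsBarred24153 (w : List ℕ) : Prop :=
  ∃ a b c d, a ∈ w ∧ b ∈ w ∧ c ∈ w ∧ d ∈ w ∧ a < b ∧ b < c ∧ c < d ∧
    Precedes w b d ∧ Precedes w d a ∧ Precedes w a c ∧
    ¬ ∃ e, e ∈ w ∧ d < e ∧ Precedes w a e ∧ Precedes w e c

/-- The number of descents of a word. -/
def des (w : List ℕ) : ℕ := ((w.zip w.tail).filter (fun p => p.2 < p.1)).length

/-- The finset of all words of permutations of `{1,…,n}`. -/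
def permsOf (n : ℕ) : Finset (List ℕ) := (idPerm n).permutations.toFinset

/-- The finset of `t`-revstack sortable permutations of `{1,…,n}`. -/
def revstackSortable (n t : ℕ) : Finset (List ℕ) :=
  (permsOf n).filter (fun w => revstackSort^[t] w = idPerm n)

/-- The finset of `t`-stack sortable permutations of `{1,…,n}`. -/
def stackSortable (n t : ℕ) : Finset (List ℕ) :=
  (permsOf n).filter (fun w => stackSort^[t] w = idPerm n)

/-- The descent polynomial `W(A;x) = ∑_{π ∈ A} x^{1+des(π)}` of a set of permutations. -/
noncomputable def descPoly (A : Finset (List ℕ)) : Polynomial ℚ :=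
  ∑ w ∈ A, Polynomial.X ^ (1 + des w)

/-- The `m`-th Eulerian polynomial `A_m(x) = ∑_{π ∈ S_m} x^{1+des(π)}`, with `A_0(x) = 1`. -/
noncomputable def eulerianPoly (m : ℕ) : Polynomial ℚ :=
  if m = 0 then 1 else descPoly (permsOf m)

/-- `v_t(n,i)`: the number of `t`-revstack sortable permutations of `{1,…,n}`
with exactly `i` descents. -/
def vNum (t n i : ℕ) : ℕ := ((revstackSortable n t).filter (fun w => des w = i)).card

/-- `w_t(n,i)`: the number of `t`-stack sortable permutations of `{1,…,n}`
with exactly `i` descents. -/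
def wNum (t n i : ℕ) : ℕ := ((stackSortable n t).filter (fun w => des w = i)).card

/-!
Write `w = L m R` with `m` the maximum, so that `S(w) = S(L) S(R) m`. For `a < b`, `b` comes
before `a` in `S(w)` iff `b ∈ L` and `a ∈ R`, or both lie in the same block and `b` comes before
`a` in its sorted image. Induction on this decomposition shows that this happens iff some `c > b`
lies between `b` and `a` in `w` (with `c = m` in the mixed case; `b = m` never works). Since
`T(π) = S(rev π)`, reversal turns this occurrence `b, c, a` of `231` in `rev π` into the
occurrence `a, c, b` of `132` in `π`.
-/

section Precedes

variable {u v w : List ℕ} {x y : ℕ}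

theorem precedes_append_of_mem_of_notMem (hx : x ∈ u) (hy : y ∉ u) : Precedes (u ++ v) x y := by
  unfold Precedes
  rw [List.idxOf_append_of_mem hx, List.idxOf_append_of_notMem hy]
  exact (List.idxOf_lt_length_iff.mpr hx).trans_le (Nat.le_add_right _ _)

theorem mem_of_precedes_append (hy : y ∈ u) (h : Precedes (u ++ v) x y) : x ∈ u :=
  by_contra fun hx => by
    unfold Precedes at h
    rw [List.idxOf_append_of_notMem hx, List.idxOf_append_of_mem hy] at h
    have := List.idxOf_lt_length_iff.mpr hy
    omega

theorem precedes_append_iff_left (hx : x ∈ u) (hy : y ∈ u) :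
    Precedes (u ++ v) x y ↔ Precedes u x y := by
  unfold Precedes
  rw [List.idxOf_append_of_mem hx, List.idxOf_append_of_mem hy]

theorem precedes_append_iff_right (hx : x ∉ u) (hy : y ∉ u) :
    Precedes (u ++ v) x y ↔ Precedes v x y := by
  unfold Precedes
  rw [List.idxOf_append_of_notMem hx, List.idxOf_append_of_notMem hy]
  omega

theorem exists_precedes_between_append_left {p : ℕ → Prop} (hx : x ∈ u) (hy : y ∈ u) :
    (∃ c ∈ u ++ v, p c ∧ Precedes (u ++ v) x c ∧ Precedes (u ++ v) c y) ↔
      ∃ c ∈ u, p c ∧ Precedes u x c ∧ Precedes u c y := by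
  constructor
  · rintro ⟨c, -, hc, hxc, hcy⟩
    have hcu := mem_of_precedes_append hy hcy
    exact ⟨c, hcu, hc, (precedes_append_iff_left hx hcu).mp hxc,
      (precedes_append_iff_left hcu hy).mp hcy⟩
  · rintro ⟨c, hcu, hc, hxc, hcy⟩
    exact ⟨c, List.mem_append_left v hcu, hc, (precedes_append_iff_left hx hcu).mpr hxc,
      (precedes_append_iff_left hcu hy).mpr hcy⟩

theorem exists_precedes_between_append_right {p : ℕ → Prop} (huv : u.Disjoint v) (hx : x ∈ v)
    (hy : y ∈ v) :
    (∃ c ∈ u ++ v, p c ∧ Precedes (u ++ v) x c ∧ Precedes (u ++ v) c y) ↔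
      ∃ c ∈ v, p c ∧ Precedes v x c ∧ Precedes v c y := by
  have hxu : x ∉ u := fun h => huv h hx
  have hyu : y ∉ u := fun h => huv h hy
  constructor
  · rintro ⟨c, hc_mem, hc, hxc, hcy⟩
    have hcu : c ∉ u := fun hcu => hxu (mem_of_precedes_append hcu hxc)
    exact ⟨c, (List.mem_append.mp hc_mem).resolve_left hcu, hc,
      (precedes_append_iff_right hxu hcu).mp hxc, (precedes_append_iff_right hcu hyu).mp hcy⟩
  · rintro ⟨c, hcv, hc, hxc, hcy⟩
    have hcu : c ∉ u := fun h => huv h hcv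
    exact ⟨c, List.mem_append_right u hcv, hc, (precedes_append_iff_right hxu hcu).mpr hxc,
      (precedes_append_iff_right hcu hyu).mpr hcy⟩

theorem List.Nodup.idxOf_reverse (hw : w.Nodup) (hx : x ∈ w) :
    w.reverse.idxOf x = w.length - 1 - w.idxOf x := by
  have hi := List.idxOf_lt_length_iff.mpr hx
  have hj : w.length - 1 - w.idxOf x < w.reverse.length := by
    rw [List.length_reverse]; omega
  have hxj : w.reverse[w.length - 1 - w.idxOf x] = x := by
    rw [List.getElem_reverse]
    convert List.getElem_idxOf hi using 2
    omega
  have := (List.nodup_reverse.mpr hw).idxOf_getElem _ hj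
  rwa [hxj] at this

theorem precedes_reverse_iff (hw : w.Nodup) (hx : x ∈ w) (hy : y ∈ w) :
    Precedes w.reverse x y ↔ Precedes w y x := by
  unfold Precedes
  rw [hw.idxOf_reverse hx, hw.idxOf_reverse hy]
  have := List.idxOf_lt_length_iff.mpr hx
  have := List.idxOf_lt_length_iff.mpr hy
  omega

end Precedes

theorem le_of_mem_append_cons {α : Type*} [Preorder α] {L R : List α} {m x : α}
    (hL : ∀ y ∈ L, y < m) (hR : ∀ y ∈ R, y ≤ m) (hx : x ∈ L ++ m :: R) : x ≤ m := by
  simp only [List.mem_append, List.mem_cons] at hx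
  rcases hx with hx | rfl | hx
  exacts [(hL x hx).le, le_rfl, hR x hx]

theorem stackSort_append_cons {L R : List ℕ} {m : ℕ} (hL : ∀ x ∈ L, x < m)
    (hR : ∀ x ∈ R, x ≤ m) : stackSort (L ++ m :: R) = stackSort L ++ stackSort R ++ [m] := by
  have hmax : (L ++ m :: R).max? = some m :=
    List.max?_eq_some_iff.mpr ⟨by simp, fun x => le_of_mem_append_cons hL hR⟩
  have hLm : ∀ x ∈ L, (!decide (x = m)) = true := fun x hx => by simpa using (hL x hx).ne
  obtain ⟨a, as, hw⟩ : ∃ a as, L ++ m :: R = a :: as := List.exists_cons_of_ne_nil (by simp)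
  rw [hw, stackSort, ← hw, hmax]
  simp [List.takeWhile_append_of_pos hLm, List.dropWhile_append_of_pos hLm]

theorem stackSort_induction {P : List ℕ → Prop} (nil : P [])
    (append_cons : ∀ L m R, (∀ x ∈ L, x < m) → (∀ x ∈ R, x ≤ m) → P L → P R →
      P (L ++ m :: R)) (w : List ℕ) : P w := by
  match w with
  | [] => exact nil
  | a :: as =>
    obtain ⟨m, hm⟩ : ∃ m, (a :: as).max? = some m := Option.ne_none_iff_exists'.mp (by simp)
    rw [List.max?_eq_some_iff] at hm
    obtain ⟨L, R, hmL, hw, -⟩ := List.exists_erase_eq hm.1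
    have hle : ∀ x ∈ L ++ m :: R, x ≤ m := hw ▸ hm.2
    rw [hw]
    refine append_cons L m R (fun x hx => (hle x (by simp [hx])).lt_of_ne ?_)
      (fun x hx => hle x (by simp [hx])) (stackSort_induction nil append_cons L)
      (stackSort_induction nil append_cons R)
    rintro rfl
    exact hmL hx
termination_by w.length
decreasing_by all_goals simp only [hw, List.length_append, List.length_cons]; omega

theorem stackSort_perm (w : List ℕ) : (stackSort w).Perm w := by
  induction w using stackSort_induction with
  | nil => simp [stackSort]
  | append_cons L m R hL hR ihL ihR =>
    rw [stackSort_append_cons hL hR]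
    exact ((ihL.append ihR).append_right _).trans <|
      (List.perm_append_singleton _ _).trans List.perm_middle.symm

@[simp]
theorem mem_stackSort {w : List ℕ} {x : ℕ} : x ∈ stackSort w ↔ x ∈ w :=
  (stackSort_perm w).mem_iff

theorem precedes_stackSort_iff {w : List ℕ} (hw : w.Nodup) {a b : ℕ} (ha : a ∈ w) (hb : b ∈ w)
    (hab : a < b) :
    Precedes (stackSort w) b a ↔ ∃ c ∈ w, b < c ∧ Precedes w b c ∧ Precedes w c a := by
  induction w using stackSort_induction generalizing a b with
  | nil => cases ha
  | append_cons L m R hL hR ihL ihR =>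
    obtain ⟨hLnd, hmRnd, hdisj⟩ := List.nodup_append.mp hw
    obtain ⟨hmR, hRnd⟩ := List.nodup_cons.mp hmRnd
    have hmL : m ∉ L := fun h => (hL m h).false
    have hLR : ∀ x ∈ R, x ∉ L := fun x hx hxL => hdisj x hxL x (List.mem_cons_of_mem _ hx) rfl
    have hle : ∀ x ∈ L ++ m :: R, x ≤ m := fun x => le_of_mem_append_cons hL hR
    have haLR : a ∈ L ∨ a ∈ R := by
      simp only [List.mem_append, List.mem_cons] at ha
      exact ha.imp_right (Or.resolve_left · (hab.trans_le (hle b hb)).ne)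
    rw [stackSort_append_cons hL hR]
    obtain rfl | hbm := eq_or_ne b m
    · refine iff_of_false (fun h => ?_) fun ⟨c, hc, hbc, _⟩ => (hle c hc).not_gt hbc
      have := mem_of_precedes_append (by simpa using haLR) h
      simp only [List.mem_append, mem_stackSort] at this
      exact this.elim hmL hmR
    have hbLR : b ∈ L ∨ b ∈ R := by
      simp only [List.mem_append, List.mem_cons] at hb
      exact hb.imp_right (Or.resolve_left · hbm)
    rw [precedes_append_iff_left (by simpa using hbLR) (by simpa using haLR)]
    rcases hbLR with hbL | hbR <;> rcases haLR with haL | haR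
    · rw [precedes_append_iff_left (mem_stackSort.2 hbL) (mem_stackSort.2 haL),
        ihL hLnd haL hbL hab, exists_precedes_between_append_left hbL haL]
    · refine iff_of_true (precedes_append_of_mem_of_notMem (mem_stackSort.2 hbL)
        (by simpa using hLR a haR)) ⟨m, by simp, hL b hbL, ?_, ?_⟩
      · exact precedes_append_of_mem_of_notMem hbL hmL
      · rw [precedes_append_iff_right hmL (hLR a haR)]
        exact precedes_append_of_mem_of_notMem (u := [m]) (List.mem_singleton_self m)
          (by simpa using (hab.trans (hL b hbL)).ne)
    · refine iff_of_false (fun h => hLR b hbR ?_) fun ⟨c, _, _, hbc, hca⟩ => hLR b hbR ?_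
      · simpa using mem_of_precedes_append (mem_stackSort.2 haL) h
      · exact mem_of_precedes_append (mem_of_precedes_append haL hca) hbc
    · rw [precedes_append_iff_right (by simpa using hLR b hbR) (by simpa using hLR a haR),
        ihR hRnd haR hbR hab, ← List.singleton_append, ← List.append_assoc,
        exists_precedes_between_append_right (List.disjoint_of_nodup_append (by simpa using hw))
          hbR haR]

theorem inversion_in_revstack_iff_132
    (n : ℕ) (π : List ℕ) (hπ : IsPermWord n π) (a b : ℕ)
    (ha : 1 ≤ a) (hab : a < b) (hb : b ≤ n) :
    Precedes (revstackSort π) b a ↔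
      ∃ c, c ∈ π ∧ b < c ∧ Precedes π a c ∧ Precedes π c b := by
  have hπnd : π.Nodup := hπ.nodup_iff.mpr List.nodup_range'
  have hmem : ∀ x, 1 ≤ x → x ≤ n → x ∈ π := fun x h1 h2 =>
    hπ.mem_iff.mpr (List.mem_range'_1.mpr ⟨h1, by omega⟩)
  have haπ := hmem a ha (by omega)
  have hbπ := hmem b (by omega) hb
  rw [revstackSort, precedes_stackSort_iff (List.nodup_reverse.mpr hπnd)
    (List.mem_reverse.mpr haπ) (List.mem_reverse.mpr hbπ) hab]
  simp only [List.mem_reverse]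
  refine exists_congr fun c => and_congr_right fun hc => and_congr_right fun _ => ?_
  rw [precedes_reverse_iff hπnd hbπ hc, precedes_reverse_iff hπnd hc haπ, and_comm]
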